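/- For every x > 0, the derivative of the limiting mean-field monomer-dimer pressure p satisfies x·p′(x) = g(x), where p(x) = −(1−g(x))/2 − (1/2)log(1−g(x)) and g(x) = (√(x⁴+4x²) − x²)/2. -/

import Mathlib

noncomputable def gMD (x : ℝ) : ℝ := (Real.sqrt (x ^ 4 + 4 * x ^ 2) - x ^ 2) / 2

noncomputable def pMD (x : ℝ) : ℝ :=
  -(1 - gMD x) / 2 - (1 / 2) * Real.log (1 - gMD x)

/-!
Writing `g = gMD x`, the defining square root gives `g² + x² g = x²`, i.e. `x²(1 - g) = g²`.
As `√(x⁴ + 4x²) = 2g + x²`, the chain rule gives `g' = 2x(1 - g)/(2g + x²)` and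
`p' = g'(2 - g)/(2(1 - g))`, so `x p' = x²(2 - g)/(2g + x²)`, which equals `g` by that relation.
-/

open Real

lemma sqrt_eq_two_mul_gMD_add_sq (x : ℝ) : √(x ^ 4 + 4 * x ^ 2) = 2 * gMD x + x ^ 2 := by
  unfold gMD; ring

lemma gMD_sq_add_sq_mul_gMD (x : ℝ) : gMD x ^ 2 + x ^ 2 * gMD x = x ^ 2 := by
  have hs := sq_sqrt (show 0 ≤ x ^ 4 + 4 * x ^ 2 by positivity)
  rw [sqrt_eq_two_mul_gMD_add_sq] at hs
  linear_combination hs / 4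

lemma gMD_pos {x : ℝ} (hx : x ≠ 0) : 0 < gMD x := by
  have hs : x ^ 2 < √(x ^ 4 + 4 * x ^ 2) :=
    lt_sqrt_of_sq_lt (by nlinarith [sq_pos_of_ne_zero hx])
  unfold gMD; linarith

lemma gMD_lt_one (x : ℝ) : gMD x < 1 := by
  have hs : √(x ^ 4 + 4 * x ^ 2) < x ^ 2 + 2 :=
    (sqrt_lt' (by positivity)).2 (by nlinarith)
  unfold gMD; linarith

lemma hasDerivAt_gMD {x : ℝ} (hx : x ≠ 0) :
    HasDerivAt gMD (2 * x * (1 - gMD x) / (2 * gMD x + x ^ 2)) x := by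
  have hpos : 0 < 2 * gMD x + x ^ 2 := by nlinarith [gMD_pos hx]
  have hpoly : HasDerivAt (fun y : ℝ => y ^ 4 + 4 * y ^ 2) (4 * x ^ 3 + 8 * x) x := by
    refine ((hasDerivAt_pow 4 x).add ((hasDerivAt_pow 2 x).const_mul 4)).congr_deriv ?_
    push_cast
    ring
  have hsqrt := hpoly.sqrt (by positivity)
  rw [sqrt_eq_two_mul_gMD_add_sq] at hsqrt
  refine ((hsqrt.sub (hasDerivAt_pow 2 x)).div_const 2).congr_deriv ?_
  simp only [Nat.cast_ofNat, Nat.add_one_sub_one, pow_one]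
  field_simp
  unfold gMD
  ring

lemma hasDerivAt_pMD {x g' : ℝ} (hg : HasDerivAt gMD g' x) :
    HasDerivAt pMD (g' * (2 - gMD x) / (2 * (1 - gMD x))) x := by
  have h1 : 0 < 1 - gMD x := by linarith [gMD_lt_one x]
  have hsub : HasDerivAt (fun y => 1 - gMD y) (-g') x := by
    simpa using hg.const_sub 1
  change HasDerivAt (fun y => -(1 - gMD y) / 2 - 1 / 2 * log (1 - gMD y)) _ x
  refine (hsub.neg.div_const 2 |>.sub ((hsub.log h1.ne').const_mul (1 / 2))).congr_deriv ?_
  field_simp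
  ring

/-- for every `x > 0`, `p` is differentiable at `x` with derivative
`p′(x)` satisfying `x·p′(x) = g(x)`. -/
theorem stmt9 (x : ℝ) (hx : 0 < x) :
    ∃ d : ℝ, HasDerivAt pMD d x ∧ x * d = gMD x := by
  refine ⟨_, hasDerivAt_pMD (hasDerivAt_gMD hx.ne'), ?_⟩
  have h1 : 1 - gMD x ≠ 0 := by linarith [gMD_lt_one x]
  have h2 : 2 * gMD x + x ^ 2 ≠ 0 := by nlinarith [gMD_pos hx.ne']
  field_simp
  linear_combination (-2 : ℝ) * gMD_sq_add_sq_mul_gMD x
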